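/- arXiv:1712.06868 — 9 statements merged into one kernel-verified Lean document; each statement's English description precedes it below -/
import Mathlib

section
/- Let L be a first-order language in which every function symbol has arity 0 (i.e. only constants) and every relation symbol has arity at most 1, let k : ℕ, and let L' := L.sum L_k, where L_k is the language with no function symbols and unary relation symbols R i indexed by i : Fin k. Then for every type α and every formula φ : L'.Formula α there exists a formula ψ : L.Formula α such that for every L-structure on a type M and every assignment v : α → M, ψ.Realize v holds if and only if there exists P : Fin k → M → Prop such that φ.Realize v holds in the L'-structure on M obtained by extending the given L-structure with the interpretation of each R i as P i. -/
/-!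
Fix the finitely many terms, nullary and unary relation symbols occurring in `φ`, and let `q` be
its quantifier depth. By an Ehrenfeucht–Fraïssé argument, whether `φ` holds at a tuple depends
only on the atomic facts about the tuple and, for each unary type, on the number of elements
outside the tuple of that type, counted up to `q`. If `M` and `M'` have the same such data for
the symbols of `L`, counted up to `2 ^ k * q + 1`, then any predicates `P` on `M` can be copied
to predicates `P'` on `M'` so that the expanded data agree up to `q`: inside each unary type,
the `2 ^ k` colour classes cut out by `P` are reproduced in `M'` up to `q` elements each. Hence
`∃ P, φ` is invariant under agreement on finitely many `L`-formulas, and so it is equivalent to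
a disjunction of truth profiles of these formulas.
-/

open FirstOrder Language

/-- The language with no function symbols and unary relation symbols indexed by `I`. -/
def monadicLang (I : Type) : FirstOrder.Language :=
  { Functions := fun _ => Empty
    Relations := fun n => match n with
      | 1 => I
      | _ => Empty }

/-- The `monadicLang I`-structure on `M` interpreting the relation symbol `i` as `P i`. -/
def monadicStructure {I : Type} {M : Type*} (P : I → M → Prop) :
    (monadicLang I).Structure M where
  funMap := fun {_} f _ => f.elim
  RelMap := fun {n} r x =>
    match n, r, x with
    | 0, r, _ => r.elim
    | 1, i, x => P i (x 0)
    | _ + 2, r, _ => r.elim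

instance (I : Type) (n : ℕ) : IsEmpty ((monadicLang I).Functions n) :=
  inferInstanceAs (IsEmpty Empty)

theorem monadicLang_arity_le_one {I : Type} : ∀ {n}, (monadicLang I).Relations n → n ≤ 1
  | 0, _ => zero_le_one
  | 1, _ => le_rfl
  | _ + 2, r => (r : Empty).elim

open Set Function

section Counting

/-! ### Counting up to a bound -/

variable {X Y : Type*}

theorem Set.le_encard_iff_exists_injective {s : Set X} {j : ℕ} :
    (j : ℕ∞) ≤ s.encard ↔ ∃ f : Fin j → X, Injective f ∧ ∀ i, f i ∈ s := by
  constructor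
  · intro hj
    obtain ⟨t, hts, htj⟩ := exists_subset_encard_eq hj
    have : Finite t := finite_of_encard_eq_coe htj
    have : Nat.card t = j := by
      rw [← Nat.cast_inj (R := ℕ∞), ← htj, Set.encard, ENat.card_eq_coe_natCard]
    obtain ⟨e⟩ : Nonempty (Fin j ≃ t) := ⟨(Finite.equivFinOfCardEq this).symm⟩
    exact ⟨fun i => e i, Subtype.val_injective.comp e.injective, fun i => hts (e i).2⟩
  · rintro ⟨f, hf, hfs⟩
    calc (j : ℕ∞) = ENat.card (Fin j) := by simp
      _ ≤ (range f).encard := hf.encard_range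
      _ ≤ s.encard := encard_le_encard (range_subset_iff.2 hfs)

theorem Set.encard_iUnion_le_card_mul {Λ : Type*} [Finite Λ] {A : Λ → Set X} {q : ℕ}
    (h : ∀ c, (A c).encard ≤ q) : (⋃ c, A c).encard ≤ (Nat.card Λ * q : ℕ) := by
  have := Fintype.ofFinite Λ
  calc (⋃ c, A c).encard ≤ ∑ c, (A c).encard := by
        simpa using Finset.set_encard_biUnion_le Finset.univ A
    _ ≤ ∑ _c : Λ, (q : ℕ∞) := Finset.sum_le_sum fun c _ => h c
    _ = (Nat.card Λ * q : ℕ) := by simp [Nat.card_eq_fintype_card]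

theorem Set.InjOn.exists_comp_eqOn {Λ : Type*} {f : X → Y} {A : Set X} (hf : InjOn f A)
    (F : X → Λ) (c₀ : Λ) : ∃ G : Y → Λ, (∀ a ∈ A, G (f a) = F a) ∧ ∀ y ∉ f '' A, G y = c₀ := by
  classical
  refine ⟨fun y => if hy : ∃ a ∈ A, f a = y then F hy.choose else c₀, fun a ha => ?_,
    fun y hy => dif_neg hy⟩
  have hy : ∃ a' ∈ A, f a' = f a := ⟨a, ha, rfl⟩
  simp only [dif_pos hy, hf hy.choose_spec.1 ha hy.choose_spec.2]

theorem Set.setOf_notMem_insert_and {Z : Type*} (x : Z) (S : Set Z) (p : Z → Prop) :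
    {y | y ∉ insert x S ∧ p y} = {y | y ∉ S ∧ p y} \ {x} := by
  ext y
  simp only [mem_insert_iff, mem_ofPred_eq, mem_sdiff, mem_singleton_iff]
  tauto

theorem Set.sum_ext_iff {A B : Type*} {s t : Set (A ⊕ B)} :
    s = t ↔ Sum.inl ⁻¹' s = Sum.inl ⁻¹' t ∧ Sum.inr ⁻¹' s = Sum.inr ⁻¹' t :=
  ⟨by rintro rfl; exact ⟨rfl, rfl⟩, fun ⟨h₁, h₂⟩ =>
    Set.ext fun r => r.rec (fun a => Set.ext_iff.1 h₁ a) fun b => Set.ext_iff.1 h₂ b⟩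

def CardEqUpTo (N : ℕ) (s : Set X) (t : Set Y) : Prop :=
  ∀ j ≤ N, ((j : ℕ∞) ≤ s.encard ↔ (j : ℕ∞) ≤ t.encard)

namespace CardEqUpTo

variable {N : ℕ} {s : Set X} {t : Set Y}

theorem symm (h : CardEqUpTo N s t) : CardEqUpTo N t s := fun j hj => (h j hj).symm

theorem mono {N' : ℕ} (h : CardEqUpTo N s t) (hN : N' ≤ N) : CardEqUpTo N' s t :=
  fun j hj => h j (hj.trans hN)

theorem of_encard_eq (h : s.encard = t.encard) : CardEqUpTo N s t := fun _ _ => by rw [h]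

theorem of_le_encard (hs : (N : ℕ∞) ≤ s.encard) (ht : (N : ℕ∞) ≤ t.encard) :
    CardEqUpTo N s t := fun _ hj =>
  iff_of_true ((Nat.cast_le.2 hj).trans hs) ((Nat.cast_le.2 hj).trans ht)

theorem encard_eq_of_lt (h : CardEqUpTo N s t) (hs : s.encard < N) : t.encard = s.encard := by
  obtain ⟨m, hm⟩ := ENat.ne_top_iff_exists.1 (hs.trans (ENat.natCast_lt_top N)).ne
  rw [← hm] at hs ⊢
  have hmN : m < N := by exact_mod_cast hs
  refine le_antisymm (not_lt.1 fun hlt => ?_) ((h m hmN.le).1 (hm ▸ le_rfl))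
  have := (h (m + 1) hmN).2 (by exact_mod_cast Order.add_one_le_of_lt hlt)
  rw [← hm] at this
  exact absurd this (by norm_cast; omega)

theorem diff_singleton (h : CardEqUpTo (N + 1) s t) {a : X} {b : Y} (hab : a ∈ s ↔ b ∈ t) :
    CardEqUpTo N (s \ {a}) (t \ {b}) := by
  by_cases ha : a ∈ s
  · intro j hj
    have := h (j + 1) (by omega)
    rwa [← encard_sdiff_singleton_add_one ha, ← encard_sdiff_singleton_add_one (hab.1 ha),
      Nat.cast_succ, ENat.add_le_add_iff_right ENat.one_ne_top,
      ENat.add_le_add_iff_right ENat.one_ne_top] at this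
  · rw [sdiff_singleton_eq_self ha, sdiff_singleton_eq_self (mt hab.2 ha)]
    exact h.mono N.le_succ

theorem exists_injOn [Nonempty Y] (h : CardEqUpTo (N + 1) s t) {A : Set X} (hAs : A ⊆ s)
    (hA : A.encard ≤ N) : ∃ f : X → Y, InjOn f A ∧ MapsTo f A t ∧ (A = s → f '' A = t) := by
  obtain ⟨n, hn⟩ := ENat.ne_top_iff_exists.1 (ne_top_of_le_ne_top (ENat.natCast_ne_top N) hA)
  have hnN : n ≤ N := by rw [← hn] at hA; exact_mod_cast hA
  have hfin : A.Finite := finite_of_encard_eq_coe hn.symm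
  obtain ⟨f, hft, hf⟩ := hfin.exists_injOn_of_encard_le
    (hn ▸ (h n (by omega)).1 (hn ▸ encard_le_encard hAs))
  refine ⟨f, hf, hft, ?_⟩
  rintro rfl
  refine (hfin.image f).eq_of_subset_of_encard_le (image_subset_iff.2 hft) ?_
  rw [hf.encard_image, h.encard_eq_of_lt (by rw [← hn]; exact_mod_cast (by omega))]

theorem exists_coloring {Λ : Type*} [Finite Λ] [Nonempty Λ] {q : ℕ}
    (h : CardEqUpTo (Nat.card Λ * q + 1) s t) (F : X → Λ) :
    ∃ G : Y → Λ, ∀ c, CardEqUpTo q {x ∈ s | F x = c} {y ∈ t | G y = c} := by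
  rcases isEmpty_or_nonempty Y with hY | hY
  · have hs : s = ∅ := not_nonempty_iff_eq_empty.1 <| by
      simpa [eq_empty_of_isEmpty t, one_le_encard_iff_nonempty] using h 1 (by omega)
    exact ⟨isEmptyElim, fun c => .of_encard_eq (by simp [hs, eq_empty_of_isEmpty])⟩
  -- Copy the colours of `min q |s_c|` elements `A c` of each colour class `s_c` injectively into
  -- `t`, and give the rest of `t` a colour `c₀` whose class has at least `q` elements, if any.
  choose A hAs hAcard using fun c =>
    exists_subset_encard_eq (min_le_right (q : ℕ∞) {x ∈ s | F x = c}.encard)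
  have hAeq : ∀ c, ¬ (q : ℕ∞) ≤ {x ∈ s | F x = c}.encard → A c = {x ∈ s | F x = c} := by
    intro c hc
    have hcard : (A c).encard = {x ∈ s | F x = c}.encard := by
      rw [hAcard, min_eq_right (not_le.1 hc).le]
    have hfin := finite_of_encard_le_coe ((hAcard c).trans_le (min_le_left _ _))
    exact hfin.eq_of_subset_of_encard_le (hAs c) hcard.ge
  set A₀ := ⋃ c, A c
  have hA₀s : A₀ ⊆ s := iUnion_subset fun c => (hAs c).trans (sep_subset _ _)
  obtain ⟨f, hf, hft, hfs⟩ := h.exists_injOn hA₀s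
    (encard_iUnion_le_card_mul fun c => (hAcard c).trans_le (min_le_left _ _))
  obtain ⟨c₀, hc₀⟩ : ∃ c₀, (∃ c, (q : ℕ∞) ≤ {x ∈ s | F x = c}.encard) →
      (q : ℕ∞) ≤ {x ∈ s | F x = c₀}.encard := by
    by_cases hc : ∃ c, (q : ℕ∞) ≤ {x ∈ s | F x = c}.encard
    · exact ⟨hc.choose, fun _ => hc.choose_spec⟩
    · exact ⟨Classical.arbitrary Λ, fun h => absurd h hc⟩
  obtain ⟨G, hGf, hG₀⟩ := hf.exists_comp_eqOn F c₀
  refine ⟨G, fun c => ?_⟩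
  have himage : f '' A c ⊆ {y ∈ t | G y = c} := by
    rintro _ ⟨a, ha, rfl⟩
    exact ⟨hft (mem_iUnion_of_mem c ha), (hGf a (mem_iUnion_of_mem c ha)).trans (hAs c ha).2⟩
  have hAc_image : (f '' A c).encard = (A c).encard := (hf.mono (subset_iUnion A c)).encard_image
  by_cases hbig : (q : ℕ∞) ≤ {x ∈ s | F x = c}.encard
  · refine .of_le_encard hbig ?_
    calc (q : ℕ∞) = (f '' A c).encard := by rw [hAc_image, hAcard, min_eq_left hbig]
      _ ≤ _ := encard_le_encard himage
  refine .of_encard_eq ?_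
  rw [← hAeq c hbig, ← hAc_image]
  refine congrArg encard (subset_antisymm himage ?_)
  rintro y ⟨hyt, hyc⟩
  by_cases hy : y ∈ f '' A₀
  · obtain ⟨a, ha, rfl⟩ := hy
    obtain ⟨c', ha'⟩ := mem_iUnion.1 ha
    rw [hGf a ha, (hAs c' ha').2] at hyc
    exact ⟨a, hyc ▸ ha', rfl⟩
  -- `y` got the default colour `c₀ = c`, so no class is large and `f` maps `A₀ = s` onto `t`
  have hc : c₀ = c := (hG₀ y hy).symm.trans hyc
  have hA₀eq : A₀ = s := hA₀s.antisymm fun x hx => mem_iUnion.2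
    ⟨F x, by rw [hAeq (F x) fun hq => hbig (hc ▸ hc₀ ⟨F x, hq⟩)]; exact ⟨hx, rfl⟩⟩
  exact absurd (hfs hA₀eq ▸ hyt) hy

end CardEqUpTo

end Counting

namespace FirstOrder.Language

open Structure

universe w

variable {L : Language} {α γ : Type*} {n : ℕ} {M M' : Type*} [L.Structure M] [L.Structure M']

/-! ### Monadic formulas -/

def IsSimpleTerm (T : Set (L.Term α)) (t : L.Term (α ⊕ Fin n)) : Prop :=
  (∃ s ∈ T, t = s.relabel Sum.inl) ∨ ∃ i, t = var (Sum.inr i)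

theorem IsSimpleTerm.mono {T T' : Set (L.Term α)} {t : L.Term (α ⊕ Fin n)}
    (h : IsSimpleTerm T t) (hT : T ⊆ T') : IsSimpleTerm T' t :=
  h.imp (fun ⟨s, hs, e⟩ => ⟨s, hT hs, e⟩) id

theorem exists_isSimpleTerm (hfun : ∀ n, L.Functions n → n = 0) (t : L.Term (α ⊕ Fin n)) :
    ∃ T : Set (L.Term α), T.Finite ∧ IsSimpleTerm T t := by
  rcases t with (a | i) | ⟨f, ts⟩
  · exact ⟨{var a}, finite_singleton _, .inl ⟨_, rfl, rfl⟩⟩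
  · exact ⟨∅, finite_empty, .inr ⟨i, rfl⟩⟩
  · obtain rfl := hfun _ f
    refine ⟨{func f finZeroElim}, finite_singleton _, .inl ⟨_, rfl, ?_⟩⟩
    simp only [Term.relabel]
    congr 1
    funext i
    exact i.elim0

inductive IsMonadicOver (T : Set (L.Term α)) (R₀ : Set (L.Relations 0))
    (R₁ : Set (L.Relations 1)) : ∀ {m}, L.BoundedFormula α m → Prop
  | falsum {m} : IsMonadicOver T R₀ R₁ (BoundedFormula.falsum (n := m))
  | equal {m} {t₁ t₂ : L.Term (α ⊕ Fin m)} : IsSimpleTerm T t₁ → IsSimpleTerm T t₂ →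
      IsMonadicOver T R₀ R₁ (t₁.bdEqual t₂)
  | rel₀ {m} {r : L.Relations 0} (ts : Fin 0 → L.Term (α ⊕ Fin m)) : r ∈ R₀ →
      IsMonadicOver T R₀ R₁ (r.boundedFormula ts)
  | rel₁ {m} {r : L.Relations 1} {t : L.Term (α ⊕ Fin m)} : r ∈ R₁ → IsSimpleTerm T t →
      IsMonadicOver T R₀ R₁ (r.boundedFormula₁ t)
  | imp {m} {φ ψ : L.BoundedFormula α m} : IsMonadicOver T R₀ R₁ φ → IsMonadicOver T R₀ R₁ ψ →
      IsMonadicOver T R₀ R₁ (φ.imp ψ)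
  | all {m} {φ : L.BoundedFormula α (m + 1)} : IsMonadicOver T R₀ R₁ φ →
      IsMonadicOver T R₀ R₁ φ.all

theorem IsMonadicOver.mono {T T' : Set (L.Term α)} {R₀ R₀' : Set (L.Relations 0)}
    {R₁ R₁' : Set (L.Relations 1)} {φ : L.BoundedFormula α n} (h : IsMonadicOver T R₀ R₁ φ)
    (hT : T ⊆ T') (h₀ : R₀ ⊆ R₀') (h₁ : R₁ ⊆ R₁') : IsMonadicOver T' R₀' R₁' φ := by
  induction h with
  | falsum => exact .falsum
  | equal ht₁ ht₂ => exact .equal (ht₁.mono hT) (ht₂.mono hT)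
  | rel₀ ts hr => exact .rel₀ ts (h₀ hr)
  | rel₁ hr ht => exact .rel₁ (h₁ hr) (ht.mono hT)
  | imp _ _ ih₁ ih₂ => exact .imp ih₁ ih₂
  | all _ ih => exact .all ih

theorem BoundedFormula.exists_isMonadicOver (hfun : ∀ n, L.Functions n → n = 0)
    (hrel : ∀ n, L.Relations n → n ≤ 1) (φ : L.BoundedFormula α n) :
    ∃ T R₀ R₁, T.Finite ∧ R₀.Finite ∧ R₁.Finite ∧ IsMonadicOver T R₀ R₁ φ := by
  induction φ with
  | falsum => exact ⟨∅, ∅, ∅, finite_empty, finite_empty, finite_empty, .falsum⟩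
  | equal t₁ t₂ =>
    obtain ⟨T₁, hT₁, h₁⟩ := exists_isSimpleTerm hfun t₁
    obtain ⟨T₂, hT₂, h₂⟩ := exists_isSimpleTerm hfun t₂
    exact ⟨T₁ ∪ T₂, ∅, ∅, hT₁.union hT₂, finite_empty, finite_empty,
      .equal (h₁.mono subset_union_left) (h₂.mono subset_union_right)⟩
  | @rel _ l r ts =>
    rcases Nat.le_one_iff_eq_zero_or_eq_one.1 (hrel l r) with rfl | rfl
    · exact ⟨∅, {r}, ∅, finite_empty, finite_singleton r, finite_empty, .rel₀ ts rfl⟩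
    · obtain ⟨T, hT, ht⟩ := exists_isSimpleTerm hfun (ts 0)
      have hts : ts = ![ts 0] := funext fun i => by rw [Subsingleton.elim i 0]; rfl
      rw [hts]
      exact ⟨T, ∅, {r}, hT, finite_empty, finite_singleton r, .rel₁ rfl ht⟩
  | imp φ ψ ih₁ ih₂ =>
    obtain ⟨T₁, R₀₁, R₁₁, hT₁, hR₀₁, hR₁₁, h₁⟩ := ih₁
    obtain ⟨T₂, R₀₂, R₁₂, hT₂, hR₀₂, hR₁₂, h₂⟩ := ih₂
    exact ⟨T₁ ∪ T₂, R₀₁ ∪ R₀₂, R₁₁ ∪ R₁₂, hT₁.union hT₂, hR₀₁.union hR₀₂, hR₁₁.union hR₁₂,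
      .imp (h₁.mono subset_union_left subset_union_left subset_union_left)
        (h₂.mono subset_union_right subset_union_right subset_union_right)⟩
  | all φ ih =>
    obtain ⟨T, R₀, R₁, hT, hR₀, hR₁, h⟩ := ih
    exact ⟨T, R₀, R₁, hT, hR₀, hR₁, .all h⟩

def BoundedFormula.quantifierDepth : ∀ {n}, L.BoundedFormula α n → ℕ
  | _, .falsum => 0
  | _, .equal _ _ => 0
  | _, .rel _ _ => 0
  | _, .imp φ ψ => max φ.quantifierDepth ψ.quantifierDepth
  | _, .all φ => φ.quantifierDepth + 1

def liftTerm (τ : γ → L.Term α) : γ ⊕ Fin n → L.Term (α ⊕ Fin n) :=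
  Sum.elim (fun g => (τ g).relabel Sum.inl) fun i => var (Sum.inr i)

theorem IsSimpleTerm.exists_eq_liftTerm {τ : γ → L.Term α} {t : L.Term (α ⊕ Fin n)}
    (h : IsSimpleTerm (range τ) t) : ∃ g, t = liftTerm τ g := by
  rcases h with ⟨_, ⟨g, rfl⟩, rfl⟩ | ⟨i, rfl⟩
  exacts [⟨.inl g, rfl⟩, ⟨.inr i, rfl⟩]

@[simp]
theorem realize_liftTerm (τ : γ → L.Term α) (v : α → M)
    (xs : Fin n → M) (g : γ ⊕ Fin n) :
    (liftTerm τ g).realize (Sum.elim v xs) = Sum.elim (fun g => (τ g).realize v) xs g := by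
  cases g <;> simp [liftTerm, Term.realize_relabel]

theorem LHom.sumInl_onTerm_surjective {L' : Language} [∀ n, IsEmpty (L'.Functions n)] :
    Surjective (LHom.sumInl.onTerm : L.Term α → (L.sum L').Term α) := by
  intro t
  induction t with
  | var a => exact ⟨var a, rfl⟩
  | func f ts ih =>
    rcases f with f | f
    · choose s hs using ih
      exact ⟨func f s, by simp [LHom.onTerm, hs]⟩
    · exact isEmptyElim f

theorem BoundedFormula.exists_isMonadicOver_sum_monadicLang {I : Type}
    (hfun : ∀ n, L.Functions n → n = 0) (hrel : ∀ n, L.Relations n → n ≤ 1)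
    (φ : (L.sum (monadicLang I)).BoundedFormula α n) :
    ∃ (T : Finset (L.Term α)) (R₀ : Finset (L.Relations 0)) (R₁ : Finset (L.Relations 1)),
      IsMonadicOver (range fun t : T => LHom.sumInl.onTerm t.1) (Sum.inl '' (R₀ : Set _))
        (Sum.inl '' (R₁ : Set _) ∪ range Sum.inr) φ := by
  obtain ⟨T, R₀, R₁, hT, hR₀, hR₁, hφ⟩ := φ.exists_isMonadicOver
    (fun n f => Sum.elim (hfun n) isEmptyElim f)
    (fun n r => Sum.elim (hrel n) monadicLang_arity_le_one r)
  have hsurj := LHom.sumInl_onTerm_surjective (L := L) (L' := monadicLang I) (α := α)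
  obtain ⟨T', hT'⟩ := (hT.image (surjInv hsurj)).exists_finset_coe
  obtain ⟨R₀', hR₀'⟩ := (hR₀.preimage Sum.inl_injective.injOn).exists_finset_coe
  obtain ⟨R₁', hR₁'⟩ := (hR₁.preimage Sum.inl_injective.injOn).exists_finset_coe
  refine ⟨T', R₀', R₁', hφ.mono ?_ ?_ ?_⟩
  · intro t ht
    exact ⟨⟨surjInv hsurj t, by simpa [← Finset.mem_coe, hT'] using mem_image_of_mem _ ht⟩,
      surjInv_eq hsurj t⟩
  · rintro (r | r) hr
    exacts [⟨r, hR₀' ▸ hr, rfl⟩, (r : Empty).elim]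
  · rintro (r | i) hr
    exacts [.inl ⟨r, hR₁' ▸ hr, rfl⟩, .inr ⟨i, rfl⟩]

/-! ### Back-and-forth equivalence -/

def unaryType (R₁ : Set (L.Relations 1)) (x : M) : Set (L.Relations 1) :=
  {r ∈ R₁ | RelMap r ![x]}

theorem unaryType_subset (R₁ : Set (L.Relations 1)) (x : M) : unaryType R₁ x ⊆ R₁ :=
  sep_subset _ _

structure MonadicEquiv (R₀ : Set (L.Relations 0)) (R₁ : Set (L.Relations 1)) (N : ℕ)
    (w : γ → M) (w' : γ → M') : Prop where
  eq_iff : ∀ g g', w g = w g' ↔ w' g = w' g'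
  relMap_iff : ∀ r ∈ R₀, RelMap (M := M) r ![] ↔ RelMap (M := M') r ![]
  unaryType_eq : ∀ g, unaryType R₁ (w g) = unaryType R₁ (w' g)
  cardEqUpTo : ∀ T, CardEqUpTo N {x | x ∉ range w ∧ unaryType R₁ x = T}
    {y | y ∉ range w' ∧ unaryType R₁ y = T}

namespace MonadicEquiv

variable {R₀ : Set (L.Relations 0)} {R₁ : Set (L.Relations 1)} {N : ℕ} {w : γ → M} {w' : γ → M'}

theorem symm (h : MonadicEquiv R₀ R₁ N w w') : MonadicEquiv R₀ R₁ N w' w where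
  eq_iff g g' := (h.eq_iff g g').symm
  relMap_iff r hr := (h.relMap_iff r hr).symm
  unaryType_eq g := (h.unaryType_eq g).symm
  cardEqUpTo T := (h.cardEqUpTo T).symm

theorem mono {N' : ℕ} (h : MonadicEquiv R₀ R₁ N w w') (hN : N' ≤ N) :
    MonadicEquiv R₀ R₁ N' w w' :=
  { h with cardEqUpTo := fun T => (h.cardEqUpTo T).mono hN }

theorem comp {δ : Type*} (h : MonadicEquiv R₀ R₁ N w w') {π : δ → γ} (hπ : Surjective π) :
    MonadicEquiv R₀ R₁ N (w ∘ π) (w' ∘ π) where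
  eq_iff _ _ := h.eq_iff _ _
  relMap_iff := h.relMap_iff
  unaryType_eq _ := h.unaryType_eq _
  cardEqUpTo T := by simpa only [hπ.range_comp] using h.cardEqUpTo T

theorem relMap_iff_of_mem (h : MonadicEquiv R₀ R₁ N w w') {r : L.Relations 1} (hr : r ∈ R₁)
    (g : γ) : RelMap r ![w g] ↔ RelMap r ![w' g] := by
  have := congrArg (r ∈ ·) (h.unaryType_eq g)
  simpa [unaryType, hr] using this

theorem exists_extend (h : MonadicEquiv R₀ R₁ (N + 1) w w') (x : M) :
    ∃ x', MonadicEquiv R₀ R₁ N (fun o : Option γ => o.elim x w) fun o => o.elim x' w' := by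
  by_cases hx : x ∈ range w
  · obtain ⟨g, rfl⟩ := hx
    refine ⟨w' g, ?_⟩
    have hπ : Surjective fun o : Option γ => o.elim g id := fun g' => ⟨some g', rfl⟩
    convert (h.mono N.le_succ).comp hπ using 1 <;> funext o <;> cases o <;> rfl
  obtain ⟨x', ⟨hx', hx'T⟩⟩ : ∃ x', x' ∉ range w' ∧ unaryType R₁ x' = unaryType R₁ x := by
    have := h.cardEqUpTo (unaryType R₁ x) 1 (by omega)
    rw [Nat.cast_one, one_le_encard_iff_nonempty, one_le_encard_iff_nonempty] at this
    exact this.1 ⟨x, hx, rfl⟩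
  refine ⟨x', ⟨?_, h.relMap_iff, ?_, fun T => ?_⟩⟩
  · rintro (_ | g) (_ | g')
    exacts [iff_of_true rfl rfl, iff_of_false (fun e => hx ⟨g', e.symm⟩) fun e => hx' ⟨g', e.symm⟩,
      iff_of_false (fun e => hx ⟨g, e⟩) fun e => hx' ⟨g, e⟩, h.eq_iff g g']
  · rintro (_ | g)
    exacts [hx'T.symm, h.unaryType_eq g]
  · rw [Option.range_elim, Option.range_elim, setOf_notMem_insert_and, setOf_notMem_insert_and]
    exact (h.cardEqUpTo T).diff_singleton (and_congr (iff_of_true hx hx') (by rw [hx'T]))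

theorem exists_snoc {u : γ → M} {u' : γ → M'} {xs : Fin n → M} {xs' : Fin n → M'}
    (h : MonadicEquiv R₀ R₁ (N + 1) (Sum.elim u xs) (Sum.elim u' xs')) (x : M) :
    ∃ x', MonadicEquiv R₀ R₁ N (Sum.elim u (Fin.snoc xs x)) (Sum.elim u' (Fin.snoc xs' x')) := by
  obtain ⟨x', hx'⟩ := h.exists_extend x
  refine ⟨x', ?_⟩
  let π : γ ⊕ Fin (n + 1) → Option (γ ⊕ Fin n) :=
    Sum.elim (some ∘ Sum.inl) (Fin.lastCases none (some ∘ Sum.inr))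
  have hπ : Surjective π := by
    rintro (_ | g | i)
    exacts [⟨.inr (Fin.last n), by simp [π]⟩, ⟨.inl g, rfl⟩, ⟨.inr i.castSucc, by simp [π]⟩]
  convert hx'.comp hπ using 1
  all_goals
    funext g
    rcases g with g | i
    · rfl
    · induction i using Fin.lastCases <;> simp [π]

end MonadicEquiv

theorem IsMonadicOver.realize_iff {τ : γ → L.Term α} {R₀ : Set (L.Relations 0)}
    {R₁ : Set (L.Relations 1)} {φ : L.BoundedFormula α n} (hφ : IsMonadicOver (range τ) R₀ R₁ φ)
    {N : ℕ} (hN : φ.quantifierDepth ≤ N) {v : α → M} {v' : α → M'} {xs : Fin n → M}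
    {xs' : Fin n → M'} (h : MonadicEquiv R₀ R₁ N (Sum.elim (fun g => (τ g).realize v) xs)
      (Sum.elim (fun g => (τ g).realize v') xs')) :
    φ.Realize v xs ↔ φ.Realize v' xs' := by
  induction hφ generalizing N with
  | falsum => exact Iff.rfl
  | equal h₁ h₂ =>
    obtain ⟨g₁, rfl⟩ := h₁.exists_eq_liftTerm
    obtain ⟨g₂, rfl⟩ := h₂.exists_eq_liftTerm
    simp only [BoundedFormula.realize_bdEqual, realize_liftTerm]
    exact h.eq_iff g₁ g₂
  | rel₀ ts hr =>
    simp only [BoundedFormula.realize_rel, Matrix.empty_eq]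
    exact h.relMap_iff _ hr
  | rel₁ hr ht =>
    obtain ⟨g, rfl⟩ := ht.exists_eq_liftTerm
    simp only [BoundedFormula.realize_rel₁, realize_liftTerm]
    exact h.relMap_iff_of_mem hr g
  | imp _ _ ih₁ ih₂ =>
    simp only [BoundedFormula.realize_imp]
    exact imp_congr (ih₁ (le_of_max_le_left hN) h) (ih₂ (le_of_max_le_right hN) h)
  | all _ ih =>
    have h' := h.mono hN
    simp only [BoundedFormula.realize_all]
    constructor
    · intro H x'
      obtain ⟨x, hx⟩ := h'.symm.exists_snoc x'
      exact (ih le_rfl hx.symm).1 (H x)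
    · intro H x
      obtain ⟨x', hx⟩ := h'.exists_snoc x
      exact (ih le_rfl hx).2 (H x')

theorem IsMonadicOver.formula_realize_iff {τ : γ → L.Term α} {R₀ : Set (L.Relations 0)}
    {R₁ : Set (L.Relations 1)} {φ : L.Formula α} (hφ : IsMonadicOver (range τ) R₀ R₁ φ)
    {N : ℕ} (hN : φ.quantifierDepth ≤ N) {v : α → M} {v' : α → M'}
    (h : MonadicEquiv R₀ R₁ N (fun g => (τ g).realize v) fun g => (τ g).realize v') :
    φ.Realize v ↔ φ.Realize v' := by
  have hπ : Surjective (Sum.elim id finZeroElim : γ ⊕ Fin 0 → γ) := fun g => ⟨.inl g, rfl⟩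
  refine hφ.realize_iff hN ?_
  convert h.comp hπ using 1 <;> funext g <;> rcases g with g | i
  exacts [rfl, i.elim0, rfl, i.elim0]

/-! ### Definability -/

noncomputable def Formula.existsAtLeast (j : ℕ) (θ : L.Formula (α ⊕ Unit)) : L.Formula α :=
  Formula.iExs (Fin j) <|
    (Formula.iInf fun p : {p : Fin j × Fin j // p.1 ≠ p.2} =>
      ∼((var (Sum.inr p.1.1)).equal (var (Sum.inr p.1.2)))) ⊓
    Formula.iInf fun i => θ.relabel (Sum.map id fun _ => i)

theorem Formula.realize_existsAtLeast {j : ℕ} {θ : L.Formula (α ⊕ Unit)} {v : α → M} :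
    (θ.existsAtLeast j).Realize v ↔ (j : ℕ∞) ≤ {x | θ.Realize (Sum.elim v fun _ => x)}.encard := by
  rw [Set.le_encard_iff_exists_injective]
  simp only [existsAtLeast, realize_iExs, realize_inf, realize_iInf, realize_not, realize_equal,
    Term.realize_var, Sum.elim_inr, realize_relabel]
  refine exists_congr fun xs => and_congr ⟨fun h i i' e => ?_, fun h p e => p.2 (h e)⟩
    (forall_congr' fun i => ?_)
  · by_contra hne
    exact h ⟨(i, i'), hne⟩ e
  · rw [Sum.elim_comp_map]
    rfl

theorem unaryType_eq_iff {R₁ T : Set (L.Relations 1)} (hT : T ⊆ R₁) {x : M} :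
    unaryType R₁ x = T ↔ ∀ r ∈ R₁, (RelMap r ![x] ↔ r ∈ T) := by
  constructor
  · rintro rfl r hr
    simp [unaryType, hr]
  · intro h
    ext r
    exact ⟨fun ⟨hr, hx⟩ => (h r hr).1 hx, fun hrT => ⟨hT hrT, (h r (hT hrT)).2 hrT⟩⟩

open Classical in
noncomputable def freshOfTypeFormula [Finite γ] (τ : γ → L.Term α) (R₁ T : Finset (L.Relations 1)) :
    L.Formula (α ⊕ Unit) :=
  (Formula.iInf fun g => ∼(((τ g).relabel Sum.inl).equal (var (Sum.inr ())))) ⊓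
    Formula.iInf fun r : R₁ =>
      if r.1 ∈ T then r.1.formula₁ (var (Sum.inr ())) else ∼(r.1.formula₁ (var (Sum.inr ())))

theorem realize_freshOfTypeFormula [Finite γ] {τ : γ → L.Term α}
    {R₁ T : Finset (L.Relations 1)} (hT : T ⊆ R₁) {v : α → M} {x : M} :
    (freshOfTypeFormula τ R₁ T).Realize (Sum.elim v fun _ => x) ↔
      x ∉ range (fun g => (τ g).realize v) ∧ unaryType (R₁ : Set (L.Relations 1)) x = T := by
  rw [unaryType_eq_iff (Finset.coe_subset.2 hT)]
  simp only [freshOfTypeFormula, Formula.realize_inf, Formula.realize_iInf, Formula.realize_not,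
    Formula.realize_equal, Term.realize_relabel, Term.realize_var, Sum.elim_comp_inl, Sum.elim_inr,
    mem_range, not_exists, Finset.mem_coe, Subtype.forall]
  refine and_congr Iff.rfl (forall₂_congr fun r _ => ?_)
  split_ifs with hr <;> simp [Formula.realize_rel₁, hr]

noncomputable def charFormula [Finite γ] (τ : γ → L.Term α) (R₀ : Finset (L.Relations 0))
    (R₁ : Finset (L.Relations 1)) (N : ℕ) :
    (γ × γ) ⊕ R₀ ⊕ (R₁ × γ) ⊕ (R₁.powerset × Fin (N + 1)) → L.Formula α
  | .inl p => (τ p.1).equal (τ p.2)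
  | .inr (.inl r) => r.1.formula ![]
  | .inr (.inr (.inl p)) => p.1.1.formula₁ (τ p.2)
  | .inr (.inr (.inr p)) => (freshOfTypeFormula τ R₁ p.1.1).existsAtLeast p.2

theorem monadicEquiv_of_forall_realize_charFormula_iff [Finite γ] {τ : γ → L.Term α}
    {R₀ : Finset (L.Relations 0)} {R₁ : Finset (L.Relations 1)} {N : ℕ} {v : α → M}
    {v' : α → M'} (h : ∀ i, (charFormula τ R₀ R₁ N i).Realize v ↔
      (charFormula τ R₀ R₁ N i).Realize v') :
    MonadicEquiv (R₀ : Set (L.Relations 0)) R₁ N (fun g => (τ g).realize v)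
      fun g => (τ g).realize v' where
  eq_iff g g' := by simpa [charFormula] using h (.inl (g, g'))
  relMap_iff r hr := by
    simpa [charFormula, Formula.realize_rel, Matrix.empty_eq] using h (.inr (.inl ⟨r, hr⟩))
  unaryType_eq g := by
    ext r
    by_cases hr : r ∈ R₁
    · simpa [unaryType, hr, charFormula] using h (.inr (.inr (.inl (⟨r, hr⟩, g))))
    · simp [unaryType, hr]
  cardEqUpTo T := by
    by_cases hT : T ⊆ ↑R₁
    · obtain ⟨T, rfl⟩ := (R₁.finite_toSet.subset hT).exists_finset_coe
      intro j hj
      have := h (.inr (.inr (.inr (⟨T, Finset.mem_powerset.2 (Finset.coe_subset.1 hT)⟩,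
        ⟨j, by omega⟩))))
      simpa only [charFormula, Formula.realize_existsAtLeast,
        realize_freshOfTypeFormula (Finset.coe_subset.1 hT)] using this
    · have hM (x : M) : unaryType (R₁ : Set (L.Relations 1)) x ≠ T :=
        fun hx => hT (hx ▸ unaryType_subset _ x)
      have hM' (x : M') : unaryType (R₁ : Set (L.Relations 1)) x ≠ T :=
        fun hx => hT (hx ▸ unaryType_subset _ x)
      exact .of_encard_eq (by simp [hM, hM'])

theorem exists_formula_iff_of_invariant {ι : Type*} [Finite ι] (χ : ι → L.Formula α)
    (Q : ∀ (M : Type w) [L.Structure M], (α → M) → Prop)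
    (hQ : ∀ (M M' : Type w) [L.Structure M] [L.Structure M'] (v : α → M) (v' : α → M'),
      (∀ i, (χ i).Realize v ↔ (χ i).Realize v') → Q M v → Q M' v') :
    ∃ ψ : L.Formula α, ∀ (M : Type w) [L.Structure M] (v : α → M), ψ.Realize v ↔ Q M v := by
  classical
  let profile (s : Set ι) : L.Formula α := Formula.iInf fun i => if i ∈ s then χ i else ∼(χ i)
  have realize_profile {M : Type w} [L.Structure M] (v : α → M) (s : Set ι) :
      (profile s).Realize v ↔ ∀ i, ((χ i).Realize v ↔ i ∈ s) := by
    simp only [profile, Formula.realize_iInf]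
    refine forall_congr' fun i => ?_
    split_ifs with hi <;> simp [hi]
  refine ⟨Formula.iSup fun s : {s : Set ι // ∃ (M : Type w) (_ : L.Structure M) (v : α → M),
    Q M v ∧ (profile s).Realize v} => profile s.1, fun M _ v => ?_⟩
  rw [Formula.realize_iSup]
  constructor
  · rintro ⟨⟨s, M', _, v', hQ', hs'⟩, hs⟩
    rw [realize_profile] at hs hs'
    exact hQ M' M v' v (fun i => (hs' i).trans (hs i).symm) hQ'
  · intro hQv
    have hs := (realize_profile v {i | (χ i).Realize v}).2 fun i => Iff.rfl
    exact ⟨⟨_, M, _, v, hQv, hs⟩, hs⟩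

/-! ### Expansions by unary predicates -/

theorem unaryType_sum_eq_iff {L' : Language} [L'.Structure M] {R₁ : Set (L.Relations 1)} {x : M}
    {σ : Set ((L.sum L').Relations 1)} :
    unaryType (Sum.inl '' R₁ ∪ range Sum.inr) x = σ ↔
      unaryType R₁ x = Sum.inl ⁻¹' σ ∧ {r : L'.Relations 1 | RelMap r ![x]} = Sum.inr ⁻¹' σ := by
  refine (Set.sum_ext_iff (A := L.Relations 1) (B := L'.Relations 1)).trans
    (and_congr (Eq.congr_left ?_) (Eq.congr_left ?_))
  · ext r
    constructor
    · rintro ⟨⟨r', hr', e⟩ | ⟨_, e⟩, hx⟩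
      · cases Sum.inl_injective e
        exact ⟨hr', hx⟩
      · cases e
    · rintro ⟨hr, hx⟩
      exact ⟨.inl ⟨r, hr, rfl⟩, hx⟩
  · ext i
    exact ⟨fun ⟨_, hx⟩ => hx, fun hx => ⟨.inr ⟨i, rfl⟩, hx⟩⟩

theorem MonadicEquiv.exists_expansion {I : Type} [Finite I] {R₀ : Set (L.Relations 0)}
    {R₁ : Set (L.Relations 1)} {q : ℕ} {w : γ → M} {w' : γ → M'}
    (h : MonadicEquiv R₀ R₁ (Nat.card (Set I) * q + 1) w w') (P : I → M → Prop) :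
    ∃ P' : I → M' → Prop,
      letI := monadicStructure P
      letI := monadicStructure P'
      MonadicEquiv (L := L.sum (monadicLang I)) (Sum.inl '' R₀) (Sum.inl '' R₁ ∪ range Sum.inr)
        q w w' := by
  let colour (x : M) : Set I := {i | P i x}
  choose G hG using fun T => (h.cardEqUpTo T).exists_coloring colour
  have hfactor : FactorsThrough (colour ∘ w) w' := fun g g' e => by
    simp only [comp_apply, (h.eq_iff g g').2 e]
  let G' : M' → Set I := extend w' (colour ∘ w) fun y => G (unaryType R₁ y) y
  have hG' (y : M') (hy : y ∉ range w') : G' y = G (unaryType R₁ y) y := extend_apply' _ _ _ hy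
  let _ := monadicStructure P
  let _ := monadicStructure fun i y => i ∈ G' y
  set R₁' : Set ((L.sum (monadicLang I)).Relations 1) := Sum.inl '' R₁ ∪ range Sum.inr
  have key (x : M) σ : unaryType R₁' x = σ ↔
      unaryType R₁ x = Sum.inl ⁻¹' σ ∧ colour x = Sum.inr ⁻¹' σ := unaryType_sum_eq_iff
  have key' (y : M') σ : unaryType R₁' y = σ ↔
      unaryType R₁ y = Sum.inl ⁻¹' σ ∧ G' y = Sum.inr ⁻¹' σ := unaryType_sum_eq_iff
  refine ⟨fun i y => i ∈ G' y, h.eq_iff, ?_, fun g => ?_, fun σ => ?_⟩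
  · rintro _ ⟨r, hr, rfl⟩
    exact h.relMap_iff r hr
  · obtain ⟨h₁, h₂⟩ := (key' (w' g) _).1 rfl
    rw [key, ← h₁, ← h₂]
    exact ⟨h.unaryType_eq g, (hfactor.extend_apply _ g).symm⟩
  · have e : {x | x ∉ range w ∧ unaryType R₁' x = σ} =
        {x ∈ {x | x ∉ range w ∧ unaryType R₁ x = Sum.inl ⁻¹' σ} | colour x = Sum.inr ⁻¹' σ} := by
      ext x
      simp only [mem_ofPred_eq, key, and_assoc]
    have e' : {y | y ∉ range w' ∧ unaryType R₁' y = σ} =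
        {y ∈ {y | y ∉ range w' ∧ unaryType R₁ y = Sum.inl ⁻¹' σ} |
          G (Sum.inl ⁻¹' σ) y = Sum.inr ⁻¹' σ} := by
      ext y
      simp only [mem_ofPred_eq, key', and_assoc]
      refine and_congr_right fun hy => and_congr_right fun hyσ => ?_
      rw [hG' y hy, hyσ]
    rw [e, e']
    exact hG _ _

end FirstOrder.Language

theorem predicate_elimination_monadic_simultaneous (L : FirstOrder.Language)
    (hfun : ∀ n, L.Functions n → n = 0)
    (hrel : ∀ n, L.Relations n → n ≤ 1)
    (k : ℕ)
    (α : Type*) (φ : (L.sum (monadicLang (Fin k))).Formula α) :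
    ∃ ψ : L.Formula α,
      ∀ (M : Type*) [L.Structure M] (v : α → M),
        ψ.Realize v ↔
          ∃ P : Fin k → M → Prop,
            letI : (monadicLang (Fin k)).Structure M := monadicStructure P
            φ.Realize v := by
  obtain ⟨T, R₀, R₁, hφ⟩ := φ.exists_isMonadicOver_sum_monadicLang hfun hrel
  refine exists_formula_iff_of_invariant
    (charFormula (fun t : T => t.1) R₀ R₁ (Nat.card (Set (Fin k)) * φ.quantifierDepth + 1))
    (fun M _ v => ∃ P : Fin k → M → Prop,
      letI : (monadicLang (Fin k)).Structure M := monadicStructure P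
      φ.Realize v) ?_
  rintro M M' _ _ v v' hv ⟨P, hP⟩
  obtain ⟨P', hP'⟩ := (monadicEquiv_of_forall_realize_charFormula_iff hv).exists_expansion P
  let _ := monadicStructure P
  let _ := monadicStructure P'
  refine ⟨P', (hφ.formula_realize_iff le_rfl ?_).1 hP⟩
  simpa only [LHom.realize_onTerm] using hP'
end

section
/- Let L be a first-order language with no function symbols in which every relation symbol has arity 1, and let φ be an L-sentence. Let Spec := {n : ℕ | 0 < n ∧ ∃ S : L.Structure (Fin n), φ is realized in the structure S}. Then either Spec is finite, or {n : ℕ | 0 < n} \ Spec is finite. -/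
open FirstOrder Language

/-!
In a relational monadic language, a sentence of quantifier depth `q` cannot distinguish two
finite structures in which every color (truth assignment to the finitely many relation symbols
of the sentence) has the same number of elements, counted only up to `q`: this is the
Ehrenfeucht–Fraïssé argument, where Duplicator answers a fresh element by a fresh element of the
same color. A structure with more than `q · 2^r` elements (`r` relation symbols) has a color
with more than `q` elements, and adding or deleting one element of that color does not change
the truncated counts. So above `q · 2^r` either every cardinality has a model or none does.
-/

namespace FirstOrder.Language

variable {L : Language}

theorem Term.exists_eq_var [L.IsRelational] {β : Type*} : ∀ t : L.Term β, ∃ i, t = var i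
  | var i => ⟨i, rfl⟩
  | func f _ => isEmptyElim f

namespace BoundedFormula

variable {α : Type*}

def relSymbols : ∀ {n : ℕ}, L.BoundedFormula α n → Set (Σ k, L.Relations k)
  | _, falsum => ∅
  | _, equal _ _ => ∅
  | _, rel R _ => {⟨_, R⟩}
  | _, imp f g => f.relSymbols ∪ g.relSymbols
  | _, all f => f.relSymbols

theorem relSymbols_finite : ∀ {n : ℕ} (φ : L.BoundedFormula α n), φ.relSymbols.Finite
  | _, falsum => Set.finite_empty
  | _, equal _ _ => Set.finite_empty
  | _, rel _ _ => Set.finite_singleton _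
  | _, imp f g => f.relSymbols_finite.union g.relSymbols_finite
  | _, all f => f.relSymbols_finite

def quantifierDepth_s3 : ∀ {n : ℕ}, L.BoundedFormula α n → ℕ
  | _, falsum => 0
  | _, equal _ _ => 0
  | _, rel _ _ => 0
  | _, imp f g => max f.quantifierDepth_s3 g.quantifierDepth_s3
  | _, all f => f.quantifierDepth_s3 + 1

end BoundedFormula

end FirstOrder.Language

theorem Set.ncard_image_eq_of_forall_eq_iff {ι α β : Type*} {f : ι → α} {g : ι → β}
    (h : ∀ i j, f i = f j ↔ g i = g j) (I : Set ι) : (f '' I).ncard = (g '' I).ncard := by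
  set P := (fun i => (f i, g i)) '' I
  have hfst : f '' I = Prod.fst '' P := by rw [Set.image_image]
  have hsnd : g '' I = Prod.snd '' P := by rw [Set.image_image]
  have hinj₁ : P.InjOn Prod.fst := by
    rintro _ ⟨i, -, rfl⟩ _ ⟨j, -, rfl⟩ hij
    exact Prod.ext hij ((h i j).1 hij)
  have hinj₂ : P.InjOn Prod.snd := by
    rintro _ ⟨i, -, rfl⟩ _ ⟨j, -, rfl⟩ hij
    exact Prod.ext ((h i j).2 hij) hij
  rw [hfst, hsnd, hinj₁.ncard_image, hinj₂.ncard_image]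

theorem Set.min_ncard_preimage_eq {α β : Type*} [Finite α] [Finite β] {g : β → α} {a : α}
    (hg : Set.BijOn g (g ⁻¹' {a})ᶜ {a}ᶜ) {C : Set α} {q : ℕ}
    (hC : a ∈ C → q < C.ncard) :
    min q (g ⁻¹' C).ncard = min q C.ncard := by
  have hbij : Set.BijOn g (g ⁻¹' (C \ {a})) (C \ {a}) := by
    convert hg.subset_right (Set.sdiff_subset_compl C {a}) using 1
    ext b
    simp [and_comm]
  have hle : (C \ {a}).ncard ≤ (g ⁻¹' C).ncard :=
    hbij.ncard_eq ▸ Set.ncard_le_ncard (Set.preimage_mono Set.sdiff_subset)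
  by_cases ha : a ∈ C
  · have := Set.ncard_sdiff_singleton_add_one ha
    have := hC ha
    omega
  · rw [Set.sdiff_singleton_eq_self ha] at hbij
    rw [hbij.ncard_eq]

theorem Fin.bijOn_succAbove {n : ℕ} (a : Fin (n + 1)) :
    Set.BijOn a.succAbove (a.succAbove ⁻¹' {a})ᶜ {a}ᶜ := by
  rw [Set.eq_empty_of_forall_notMem (s := a.succAbove ⁻¹' {a}) (Fin.succAbove_ne a),
    Set.compl_empty,
    ← Fin.range_succAbove, ← Set.image_univ]
  exact Fin.succAbove_right_injective.injOn.bijOn_image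

theorem Fin.bijOn_snoc_id {n : ℕ} (a : Fin n) :
    Set.BijOn (Fin.snoc id a : Fin (n + 1) → Fin n) ((Fin.snoc id a) ⁻¹' {a})ᶜ {a}ᶜ := by
  refine ⟨fun _ h => h, fun i hi j hj hij => ?_,
    fun x hx => ⟨x.castSucc, by simpa using hx, by simp⟩⟩
  induction i using Fin.lastCases <;> induction j using Fin.lastCases <;> simp_all

namespace MonadicSpectrum

variable {L : Language} (Rs : Set (Σ k, L.Relations k)) {M N : Type*} [L.Structure M]
  [L.Structure N]

def color (x : M) : Rs → Prop := fun s => Structure.RelMap s.1.2 fun _ => x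

def cell (M : Type*) [L.Structure M] (t : Rs → Prop) : Set M := {x | color Rs x = t}

def CellCountsAgree (q : ℕ) (M N : Type*) [L.Structure M] [L.Structure N] : Prop :=
  ∀ t, min q (cell Rs M t).ncard = min q (cell Rs N t).ncard

def SameAtomicType {k : ℕ} (xs : Fin k → M) (ys : Fin k → N) : Prop :=
  (∀ i j, xs i = xs j ↔ ys i = ys j) ∧ ∀ i, color Rs (xs i) = color Rs (ys i)

variable {Rs} {q k : ℕ} {xs : Fin k → M} {ys : Fin k → N}

theorem CellCountsAgree.symm (h : CellCountsAgree Rs q M N) : CellCountsAgree Rs q N M :=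
  fun t => (h t).symm

theorem SameAtomicType.symm (h : SameAtomicType Rs xs ys) : SameAtomicType Rs ys xs :=
  ⟨fun i j => (h.1 i j).symm, fun i => (h.2 i).symm⟩

theorem SameAtomicType.snoc (h : SameAtomicType Rs xs ys) {x : M} {y : N}
    (hxy : ∀ i, xs i = x ↔ ys i = y) (hc : color Rs x = color Rs y) :
    SameAtomicType Rs (Fin.snoc xs x : Fin (k + 1) → M) (Fin.snoc ys y) := by
  refine ⟨fun i j => ?_, fun i => ?_⟩
  · induction i using Fin.lastCases <;> induction j using Fin.lastCases <;>
      simp [h.1, hxy, eq_comm (a := x), eq_comm (a := y)]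
  · induction i using Fin.lastCases <;> simp [h.2, hc]

/-- If every `y` of the color of `x` were hit by `ys`, then `N` would have no more elements of
that color than `xs` hits, i.e. fewer than `M` has and fewer than `q`. -/
theorem SameAtomicType.exists_notMem_range [Finite M] (hq : CellCountsAgree Rs q M N)
    (h : SameAtomicType Rs xs ys) (hk : k < q) {x : M} (hx : x ∉ Set.range xs) :
    ∃ y, color Rs x = color Rs y ∧ y ∉ Set.range ys := by
  by_contra! hcov
  set t := color Rs x
  set I := {i | color Rs (xs i) = t}
  have hN : cell Rs N t ⊆ ys '' I := by
    intro y hy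
    obtain ⟨i, rfl⟩ := hcov y hy.symm
    exact ⟨i, (h.2 i).trans hy, rfl⟩
  have hM : xs '' I ⊂ cell Rs M t :=
    (Set.ssubset_iff_of_subset (by rintro _ ⟨i, hi, rfl⟩; exact hi)).2
      ⟨x, rfl, fun ⟨i, _, hi⟩ => hx ⟨i, hi⟩⟩
  have hNI := Set.ncard_le_ncard hN
  have hIM := Set.ncard_lt_ncard hM
  have hIk : (xs '' I).ncard ≤ k :=
    le_trans Set.ncard_image_le (by simpa using Set.ncard_le_card I)
  rw [← Set.ncard_image_eq_of_forall_eq_iff h.1] at hNI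
  have := hq t
  omega

theorem SameAtomicType.exists_snoc [Finite M] (hq : CellCountsAgree Rs q M N)
    (h : SameAtomicType Rs xs ys) (hk : k < q) (x : M) :
    ∃ y, SameAtomicType Rs (Fin.snoc xs x : Fin (k + 1) → M) (Fin.snoc ys y) := by
  by_cases hx : x ∈ Set.range xs
  · obtain ⟨i, rfl⟩ := hx
    exact ⟨ys i, h.snoc (fun j => h.1 j i) (h.2 i)⟩
  · obtain ⟨y, hc, hy⟩ := h.exists_notMem_range hq hk hx
    exact ⟨y, h.snoc (fun j => iff_of_false (hx ⟨j, ·⟩) (hy ⟨j, ·⟩)) hc⟩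

theorem realize_iff_of_sameAtomicType [L.IsRelational] (hrel : ∀ n, L.Relations n → n = 1)
    [Finite M] [Finite N] (hq : CellCountsAgree Rs q M N) (ψ : L.BoundedFormula Empty k)
    (hRs : ψ.relSymbols ⊆ Rs) (hψ : ψ.quantifierDepth_s3 + k ≤ q)
    (h : SameAtomicType Rs xs ys) :
    ψ.Realize default xs ↔ ψ.Realize default ys := by
  induction ψ with
  | falsum => rfl
  | equal t₁ t₂ =>
    obtain ⟨⟨⟨⟩⟩ | i, rfl⟩ := t₁.exists_eq_var
    obtain ⟨⟨⟨⟩⟩ | j, rfl⟩ := t₂.exists_eq_var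
    exact h.1 i j
  | @rel _ l R ts =>
    obtain rfl := hrel l R
    obtain ⟨⟨⟨⟩⟩ | i, hi⟩ := (ts 0).exists_eq_var
    obtain rfl : ts = fun _ => Term.var (Sum.inr i) :=
      funext fun j => Fin.fin_one_eq_zero j ▸ hi
    exact iff_of_eq (congrFun (h.2 i) ⟨⟨1, R⟩, hRs rfl⟩)
  | imp f g ihf ihg =>
    simp only [BoundedFormula.quantifierDepth_s3] at hψ
    exact imp_congr (ihf (fun _ hs => hRs (Or.inl hs)) (by omega) h)
      (ihg (fun _ hs => hRs (Or.inr hs)) (by omega) h)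
  | @all n f ih =>
    have hd : f.quantifierDepth_s3 + (n + 1) ≤ q := by
      simp only [BoundedFormula.quantifierDepth_s3] at hψ
      omega
    simp only [BoundedFormula.realize_all]
    constructor
    · intro hM y
      obtain ⟨x, hyx⟩ := h.symm.exists_snoc hq.symm (by omega) y
      exact (ih hRs hd hyx.symm).1 (hM x)
    · intro hN x
      obtain ⟨y, hxy⟩ := h.exists_snoc hq (by omega) x
      exact (ih hRs hd hxy).2 (hN y)

theorem realize_sentence_iff_of_cellCountsAgree [L.IsRelational]
    (hrel : ∀ n, L.Relations n → n = 1) [Finite M] [Finite N] (φ : L.Sentence)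
    (hq : CellCountsAgree φ.relSymbols φ.quantifierDepth_s3 M N) : M ⊨ φ ↔ N ⊨ φ :=
  realize_iff_of_sameAtomicType hrel hq φ subset_rfl le_rfl ⟨finZeroElim, finZeroElim⟩

theorem exists_lt_ncard_cell [Finite M] (hRs : Rs.Finite)
    (h : Nat.card (Rs → Prop) * q < Nat.card M) :
    ∃ a : M, q < (cell Rs M (color Rs a)).ncard := by
  classical
  have := hRs.fintype
  have := Fintype.ofFinite M
  rw [Nat.card_eq_fintype_card, Nat.card_eq_fintype_card] at h
  obtain ⟨t, ht⟩ := Fintype.exists_lt_card_fiber_of_mul_lt_card (color Rs) h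
  have hcell : (cell Rs M t).ncard = (Finset.univ.filter fun x : M => color Rs x = t).card := by
    rw [← Set.ncard_coe_finset]
    simp [cell]
  obtain ⟨a, ha⟩ : (cell Rs M t).Nonempty := Set.nonempty_of_ncard_ne_zero (by omega)
  exact ⟨a, (ha : color Rs a = t) ▸ hcell ▸ ht⟩

section Comap

variable [L.IsRelational] {β : Type*}

abbrev comapStructure (g : β → M) : L.Structure β where
  funMap f := isEmptyElim f
  RelMap R xs := Structure.RelMap R (g ∘ xs)

theorem realize_comapStructure_iff (hrel : ∀ n, L.Relations n → n = 1) [Finite M] [Finite β]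
    (φ : L.Sentence) {g : β → M} {a : M} (hg : Set.BijOn g (g ⁻¹' {a})ᶜ {a}ᶜ)
    (ha : φ.quantifierDepth_s3 < (cell φ.relSymbols M (color φ.relSymbols a)).ncard) :
    @Sentence.Realize L β (comapStructure (L := L) g) φ ↔ M ⊨ φ :=
  letI := comapStructure (L := L) g
  realize_sentence_iff_of_cellCountsAgree hrel φ fun _ =>
    Set.min_ncard_preimage_eq hg fun (hat : color φ.relSymbols a = _) => hat ▸ ha

end Comap

end MonadicSpectrum

namespace FirstOrder.Language.Sentence

open MonadicSpectrum

variable {L : Language}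

def HasFinModel (φ : L.Sentence) (n : ℕ) : Prop :=
  ∃ S : L.Structure (Fin n), @Sentence.Realize L (Fin n) S φ

variable [L.IsRelational] (hrel : ∀ n, L.Relations n → n = 1) (φ : L.Sentence)

include hrel in
theorem hasFinModel_succ_iff {n : ℕ}
    (hn : Nat.card (φ.relSymbols → Prop) * φ.quantifierDepth_s3 < n) :
    φ.HasFinModel (n + 1) ↔ φ.HasFinModel n := by
  constructor
  · rintro ⟨S, hS⟩
    obtain ⟨a, ha⟩ := exists_lt_ncard_cell (M := Fin (n + 1)) (q := φ.quantifierDepth_s3)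
      φ.relSymbols_finite (by simp only [Nat.card_eq_fintype_card, Fintype.card_fin]; omega)
    exact ⟨comapStructure a.succAbove,
      (realize_comapStructure_iff hrel φ (Fin.bijOn_succAbove a) ha).2 hS⟩
  · rintro ⟨S, hS⟩
    obtain ⟨a, ha⟩ := exists_lt_ncard_cell (M := Fin n) (q := φ.quantifierDepth_s3)
      φ.relSymbols_finite (by simp only [Nat.card_eq_fintype_card, Fintype.card_fin]; omega)
    exact ⟨comapStructure (Fin.snoc id a : Fin (n + 1) → Fin n),
      (realize_comapStructure_iff hrel φ (Fin.bijOn_snoc_id a) ha).2 hS⟩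

include hrel in
theorem hasFinModel_iff_of_lt {n : ℕ}
    (hn : Nat.card (φ.relSymbols → Prop) * φ.quantifierDepth_s3 < n) :
    φ.HasFinModel n ↔
      φ.HasFinModel (Nat.card (φ.relSymbols → Prop) * φ.quantifierDepth_s3 + 1) := by
  induction n, hn using Nat.le_induction with
  | base => rfl
  | succ n hn ih => exact (φ.hasFinModel_succ_iff hrel hn).trans ih

end FirstOrder.Language.Sentence

theorem monadic_spectrum_finite_or_cofinite (L : FirstOrder.Language)
    (hfun : ∀ n, IsEmpty (L.Functions n))
    (hrel : ∀ n, L.Relations n → n = 1)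
    (φ : L.Sentence) :
    ({n : ℕ | 0 < n ∧ ∃ S : L.Structure (Fin n),
        @FirstOrder.Language.Sentence.Realize L (Fin n) S φ}).Finite ∨
    ({n : ℕ | 0 < n} \ {n : ℕ | 0 < n ∧ ∃ S : L.Structure (Fin n),
        @FirstOrder.Language.Sentence.Realize L (Fin n) S φ}).Finite := by
  set N₀ := Nat.card (φ.relSymbols → Prop) * φ.quantifierDepth_s3
  have hstable : ∀ n, N₀ < n → (φ.HasFinModel n ↔ φ.HasFinModel (N₀ + 1)) :=
    fun n => φ.hasFinModel_iff_of_lt hrel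
  by_cases h : φ.HasFinModel (N₀ + 1)
  · exact Or.inr <| (Set.finite_Iic N₀).subset fun n hn =>
      not_lt.1 fun hlt => hn.2 ⟨hn.1, (hstable n hlt).2 h⟩
  · exact Or.inl <| (Set.finite_Iic N₀).subset fun n hn =>
      not_lt.1 fun hlt => h ((hstable n hlt).1 hn.2)
end

section
/- Let L be a first-order language with no function symbols in which every relation symbol has arity 1, and let φ be an L-sentence. If there exists an infinite type N and an L-structure on N in which φ is realized, then for every infinite type M there exists an L-structure on M in which φ is realized. -/
/-!
A sentence mentions only finitely many symbols, so it is a sentence of a finite sublanguage.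
Löwenheim–Skolem for that sublanguage turns the reduct of an infinite model into an elementarily
equivalent structure of any prescribed infinite cardinality; transported along a bijection to a
type of that cardinality and expanded arbitrarily to the whole language, it still satisfies the
sentence.
-/

universe u v w

namespace FirstOrder.Language

open Cardinal

variable {L : Language.{u, v}}

def sublanguage (s : Set L.Symbols) : Language.{u, v} :=
  ⟨fun n => {f : L.Functions n // .inl ⟨n, f⟩ ∈ s},
    fun n => {R : L.Relations n // .inr ⟨n, R⟩ ∈ s}⟩

def sublanguageIncl (s : Set L.Symbols) : L.sublanguage s →ᴸ L :=
  ⟨fun {_} f => f.1, fun {_} R => R.1⟩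

theorem sublanguageIncl_injective (s : Set L.Symbols) : (sublanguageIncl s).Injective :=
  ⟨fun h => Subtype.val_injective h, fun h => Subtype.val_injective h⟩

theorem card_sublanguage_le (s : Set L.Symbols) : (L.sublanguage s).card ≤ #s :=
  mk_le_of_injective (f := fun
      | .inl ⟨n, f⟩ => (⟨.inl ⟨n, f.1⟩, f.2⟩ : s)
      | .inr ⟨n, R⟩ => ⟨.inr ⟨n, R.1⟩, R.2⟩)
    (by
      rintro (⟨_, _⟩ | ⟨_, _⟩) (⟨_, _⟩ | ⟨_, _⟩) h <;>
        simp only [Sum.inl.injEq, Sum.inr.injEq, Subtype.mk.injEq, Sigma.mk.inj_iff,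
          reduceCtorEq] at h <;>
        obtain ⟨rfl, h⟩ := h <;> rw [Subtype.ext (eq_of_heq h)])

namespace Term

variable {α : Type*}

def symbols : L.Term α → Set L.Symbols
  | var _ => ∅
  | func f ts => insert (.inl ⟨_, f⟩) (⋃ i, (ts i).symbols)

theorem finite_symbols : ∀ t : L.Term α, t.symbols.Finite
  | var _ => Set.finite_empty
  | func _ ts => (Set.finite_iUnion fun i => (ts i).finite_symbols).insert _

def toSublanguage {s : Set L.Symbols} :
    ∀ t : L.Term α, t.symbols ⊆ s → (L.sublanguage s).Term α
  | var a, _ => var a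
  | func f ts, h =>
    func ⟨f, h (Set.mem_insert _ _)⟩ fun i =>
      (ts i).toSublanguage fun _ hx => h (Set.mem_insert_of_mem _ (Set.mem_iUnion_of_mem i hx))

theorem onTerm_toSublanguage {s : Set L.Symbols} :
    ∀ (t : L.Term α) (h : t.symbols ⊆ s), (sublanguageIncl s).onTerm (t.toSublanguage h) = t
  | var _, _ => rfl
  | func f ts, _ => congrArg (func f) (funext fun i => onTerm_toSublanguage (ts i) _)

end Term

namespace BoundedFormula

variable {α : Type*}

def symbols : ∀ {n}, L.BoundedFormula α n → Set L.Symbols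
  | _, falsum => ∅
  | _, equal t₁ t₂ => t₁.symbols ∪ t₂.symbols
  | _, rel R ts => insert (.inr ⟨_, R⟩) (⋃ i, (ts i).symbols)
  | _, imp φ ψ => φ.symbols ∪ ψ.symbols
  | _, all φ => φ.symbols

theorem finite_symbols : ∀ {n} (φ : L.BoundedFormula α n), φ.symbols.Finite
  | _, falsum => Set.finite_empty
  | _, equal t₁ t₂ => t₁.finite_symbols.union t₂.finite_symbols
  | _, rel _ ts => (Set.finite_iUnion fun i => (ts i).finite_symbols).insert _
  | _, imp φ ψ => φ.finite_symbols.union ψ.finite_symbols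
  | _, all φ => φ.finite_symbols

def toSublanguage {s : Set L.Symbols} :
    ∀ {n} (φ : L.BoundedFormula α n), φ.symbols ⊆ s → (L.sublanguage s).BoundedFormula α n
  | _, falsum, _ => falsum
  | _, equal t₁ t₂, h =>
    equal (t₁.toSublanguage fun _ hx => h (.inl hx)) (t₂.toSublanguage fun _ hx => h (.inr hx))
  | _, rel R ts, h =>
    rel ⟨R, h (Set.mem_insert _ _)⟩ fun i =>
      (ts i).toSublanguage fun _ hx => h (Set.mem_insert_of_mem _ (Set.mem_iUnion_of_mem i hx))
  | _, imp φ ψ, h => imp (φ.toSublanguage fun _ hx => h (.inl hx))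
      (ψ.toSublanguage fun _ hx => h (.inr hx))
  | _, all φ, h => all (φ.toSublanguage h)

theorem onBoundedFormula_toSublanguage {s : Set L.Symbols} :
    ∀ {n} (φ : L.BoundedFormula α n) (h : φ.symbols ⊆ s),
      (sublanguageIncl s).onBoundedFormula (φ.toSublanguage h) = φ
  | _, falsum, _ => rfl
  | _, equal t₁ t₂, _ =>
    congrArg₂ equal (t₁.onTerm_toSublanguage _) (t₂.onTerm_toSublanguage _)
  | _, rel R ts, _ => congrArg (rel R) (funext fun i => (ts i).onTerm_toSublanguage _)
  | _, imp φ ψ, _ =>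
    congrArg₂ imp (onBoundedFormula_toSublanguage φ _) (onBoundedFormula_toSublanguage ψ _)
  | _, all φ, _ => congrArg all (onBoundedFormula_toSublanguage φ _)

end BoundedFormula

namespace Sentence

theorem exists_structure_realize_of_card_le {φ : L.Sentence} {N : Type*} [L.Structure N]
    [Infinite N] (hN : N ⊨ φ) (M : Type w) [Infinite M]
    (hL : lift.{w} L.card ≤ lift.{max u v} #M) : ∃ S : L.Structure M, @Realize L M S φ := by
  obtain ⟨N', hNN', hcard⟩ := exists_elementarilyEquivalent_card_eq L N #M (aleph0_le_mk M) hL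
  obtain ⟨e⟩ : Nonempty (N' ≃ M) := Cardinal.eq.1 hcard
  let _ : L.Structure M := e.inducedStructure
  exact ⟨_, (StrongHomClass.realize_sentence e.inducedStructureEquiv φ).1
    ((hNN'.realize_sentence φ).1 hN)⟩

theorem exists_structure_realize_of_infinite {φ : L.Sentence} {N : Type*} [L.Structure N]
    [Infinite N] (hN : N ⊨ φ) (M : Type w) [Infinite M] :
    ∃ S : L.Structure M, @Realize L M S φ := by
  classical
  let ι := sublanguageIncl φ.symbols
  let ψ : (L.sublanguage φ.symbols).Sentence := φ.toSublanguage subset_rfl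
  have hψ : ι.onSentence ψ = φ := φ.onBoundedFormula_toSublanguage _
  let _ := ι.reduct N
  have hNψ : N ⊨ ψ := (ι.realize_onSentence _ ψ).1 (by rwa [hψ])
  have hcard : lift.{w} (L.sublanguage φ.symbols).card ≤ lift.{max u v} #M :=
    (lift_lt_aleph0.2 ((card_sublanguage_le _).trans_lt
      (lt_aleph0_iff_set_finite.2 φ.finite_symbols))).le.trans (aleph0_le_lift.2 (aleph0_le_mk M))
  obtain ⟨S, hMψ⟩ := exists_structure_realize_of_card_le hNψ M hcard
  let _ : Inhabited M := Classical.inhabited_of_nonempty inferInstance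
  let _ := ι.defaultExpansion M
  have := (sublanguageIncl_injective φ.symbols).isExpansionOn_default M
  exact ⟨_, hψ ▸ (ι.realize_onSentence _ ψ).2 hMψ⟩

end Sentence

end FirstOrder.Language

theorem monadic_infinite_domain_invariance_general (L : FirstOrder.Language)
    (φ : L.Sentence)
    (h : ∃ (N : Type*) (_ : Infinite N) (S : L.Structure N),
        @FirstOrder.Language.Sentence.Realize L N S φ) :
    ∀ (M : Type*) [Infinite M], ∃ S : L.Structure M,
        @FirstOrder.Language.Sentence.Realize L M S φ := by
  obtain ⟨N, _, _, hN⟩ := h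
  exact fun M _ => FirstOrder.Language.Sentence.exists_structure_realize_of_infinite hN M

theorem monadic_infinite_domain_invariance (L : FirstOrder.Language)
    (hfun : ∀ n, IsEmpty (L.Functions n))
    (hrel : ∀ n, L.Relations n → n = 1)
    (φ : L.Sentence)
    (h : ∃ (N : Type*) (_ : Infinite N) (S : L.Structure N),
        @FirstOrder.Language.Sentence.Realize L N S φ) :
    ∀ (M : Type*) [Infinite M], ∃ S : L.Structure M,
        @FirstOrder.Language.Sentence.Realize L M S φ :=
  monadic_infinite_domain_invariance_general L φ h
end

section
/- Let M be a nonempty type, F : M → Prop, and n : ℕ with n ≥ 1. Then at least n elements satisfy F if and only if for every function g : Fin (n-1) → M there exists x : M with F x and x ≠ g i for every i : Fin (n-1). -/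
/-- At least `k` elements of `M` satisfy `F`: semantics of the counting
quantifier `∃^{≥k} x F(x)`. -/
def AtLeast (M : Type*) (k : ℕ) (F : M → Prop) : Prop :=
  ∃ f : Fin k → M, Function.Injective f ∧ ∀ i, F (f i)

theorem counting_quantifier_expansions_equiv (M : Type*) [Nonempty M]
    (F : M → Prop) (n : ℕ) (hn : 1 ≤ n) :
    AtLeast M n F ↔ ∀ g : Fin (n - 1) → M, ∃ x : M, F x ∧ ∀ i : Fin (n - 1), x ≠ g i := by
  constructor
  · rintro ⟨f, hf, hF⟩ g
    by_contra hcon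
    push_neg at hcon
    choose h hh using fun i : Fin n => hcon (f i) (hF i)
    obtain ⟨i, j, hij, heq⟩ := Fintype.exists_ne_map_eq_of_card_lt h (by simp; omega)
    exact hij (hf (by rw [hh i, hh j, heq]))
  · intro H
    classical
    have key : ∀ k, k ≤ n → ∃ s : Finset M, s.card = k ∧ ∀ x ∈ s, F x := by
      intro k
      induction k with
      | zero => exact fun _ => ⟨∅, rfl, by simp⟩
      | succ k ih =>
        intro hk
        obtain ⟨s, hcard, hsF⟩ := ih (by omega)
        obtain ⟨d⟩ := ‹Nonempty M›
        set g : Fin (n - 1) → M := fun i => s.toList.getD i d with hg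
        obtain ⟨x, hxF, hxne⟩ := H g
        have hxs : x ∉ s := by
          intro hx
          rw [← Finset.mem_toList] at hx
          obtain ⟨i, hi, hix⟩ := List.getElem_of_mem hx
          have hlen : s.toList.length = k := by rw [Finset.length_toList, hcard]
          have hi' : i < n - 1 := by omega
          refine hxne ⟨i, hi'⟩ ?_
          rw [hg]
          simp only [List.getD_eq_getElem s.toList d (by omega : (i:ℕ) < s.toList.length)]
          exact hix.symm
        refine ⟨insert x s, ?_, ?_⟩
        · rw [Finset.card_insert_of_notMem hxs, hcard]
        · intro y hy
          rcases Finset.mem_insert.mp hy with h | h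
          · exact h ▸ hxF
          · exact hsF y h
    obtain ⟨s, hcard, hsF⟩ := key n le_rfl
    refine ⟨fun i => (s.equivFin.symm (Fin.cast hcard.symm i) : M), ?_, ?_⟩
    · intro i j hij
      have := s.equivFin.symm.injective (Subtype.ext hij)
      simpa [Fin.ext_iff] using this
    · intro i
      exact hsF _ (s.equivFin.symm (Fin.cast hcard.symm i)).2
end

section
/- Let M be a type, F : M → Prop, n : ℕ, and t : Fin n → M. For m : ℕ let NDT(m) be the statement: for every S : Finset (Fin n) with S.card = m, either ¬ F (t i) for some i ∈ S, or t i = t j for some i, j ∈ S with i ≠ j. Then (∃ x : M, F x ∧ ∀ i : Fin n, x ≠ t i) if and only if ((∃ m, 1 ≤ m ∧ m ≤ n ∧ (at least m elements satisfy F) ∧ NDT(m)) ∨ (at least n+1 elements satisfy F)). -/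
/-- `NDT F t m`: it is false that `F` holds of `m` pairwise distinct individuals
among the values `t i`. -/
def NDT {M : Type*} (F : M → Prop) {n : ℕ} (t : Fin n → M) (m : ℕ) : Prop :=
  ∀ S : Finset (Fin n), S.card = m →
    (∃ i ∈ S, ¬ F (t i)) ∨ ∃ i ∈ S, ∃ j ∈ S, i ≠ j ∧ t i = t j

lemma atLeast_of_finset {M : Type*} {F : M → Prop} (S : Finset M) (h : ∀ x ∈ S, F x) :
    AtLeast M S.card F := by
  refine ⟨fun i => (S.equivFin.symm i : M), ?_, ?_⟩
  · intro a b hab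
    exact S.equivFin.symm.injective (Subtype.ext hab)
  · intro i
    exact h _ (S.equivFin.symm i).2

theorem auxiliary_elimination_disjunctive (M : Type*) (F : M → Prop) (n : ℕ) (t : Fin n → M) :
    (∃ x : M, F x ∧ ∀ i : Fin n, x ≠ t i) ↔
      ((∃ m : ℕ, 1 ≤ m ∧ m ≤ n ∧ AtLeast M m F ∧ NDT F t m) ∨ AtLeast M (n + 1) F) := by
  classical
  constructor
  · rintro ⟨x, hF, hx⟩
    set T : Finset M := (Finset.univ.image t).filter F with hTdef
    have hTF : ∀ y ∈ T, F y := fun y hy => (Finset.mem_filter.mp hy).2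
    have hxT : x ∉ T := by
      intro h
      obtain ⟨hy, _⟩ := Finset.mem_filter.mp h
      obtain ⟨i, _, hi⟩ := Finset.mem_image.mp hy
      exact hx i hi.symm
    have hkn : T.card ≤ n := le_trans (Finset.card_filter_le _ _)
      (le_trans Finset.card_image_le (by simp))
    have hAL : AtLeast M (T.card + 1) F := by
      have hc : (insert x T).card = T.card + 1 := Finset.card_insert_of_notMem hxT
      have h2 := atLeast_of_finset (insert x T) (by
        intro y hy
        rcases Finset.mem_insert.mp hy with rfl | h
        · exact hF
        · exact hTF y h)
      rwa [hc] at h2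
    rcases lt_or_eq_of_le hkn with hlt | heq
    · left
      refine ⟨T.card + 1, Nat.succ_le_succ (Nat.zero_le _), hlt, hAL, ?_⟩
      intro S hS
      by_contra hcon
      push_neg at hcon
      obtain ⟨h1, h2⟩ := hcon
      have hsub : S.image t ⊆ T := by
        intro y hy
        obtain ⟨i, hi, rfl⟩ := Finset.mem_image.mp hy
        exact Finset.mem_filter.mpr ⟨Finset.mem_image.mpr ⟨i, Finset.mem_univ i, rfl⟩, h1 i hi⟩
      have hinj : (S.image t).card = S.card := Finset.card_image_of_injOn
        (fun i hi j hj hij => by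
          by_contra hne
          exact h2 i hi j hj hne hij)
      have := Finset.card_le_card hsub
      omega
    · right
      rwa [heq] at hAL
  · intro h
    rcases h with ⟨m, hm1, hmn, ⟨f, hfi, hfF⟩, hndt⟩ | ⟨f, hfi, hfF⟩
    · by_contra hcon
      push_neg at hcon
      choose g hg using fun j => hcon (f j) (hfF j)
      have hgi : Function.Injective g := fun a b hab => hfi (by rw [hg a, hg b, hab])
      set S := Finset.image g Finset.univ with hSdef
      have hScard : S.card = m := by
        rw [hSdef, Finset.card_image_of_injective _ hgi, Finset.card_univ, Fintype.card_fin]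
      rcases hndt S hScard with ⟨i, hi, hni⟩ | ⟨i, hi, j, hj, hij, htij⟩
      · obtain ⟨a, _, rfl⟩ := Finset.mem_image.mp hi
        exact hni (by rw [← hg a]; exact hfF a)
      · obtain ⟨a, _, rfl⟩ := Finset.mem_image.mp hi
        obtain ⟨b, _, rfl⟩ := Finset.mem_image.mp hj
        have hfab : f a = f b := by rw [hg a, hg b, htij]
        exact hij (congrArg g (hfi hfab))
    · by_contra hcon
      push_neg at hcon
      choose g hg using fun j => hcon (f j) (hfF j)
      have hgi : Function.Injective g := fun a b hab => hfi (by rw [hg a, hg b, hab])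
      have hle := Fintype.card_le_of_injective g hgi
      simp at hle
end

section
/- Let M be a type, F : M → Prop, n : ℕ, and t : Fin n → M. For m : ℕ let NDT(m) be the statement: for every S : Finset (Fin n) with S.card = m, either ¬ F (t i) for some i ∈ S, or t i = t j for some i, j ∈ S with i ≠ j. Then (∃ x : M, F x ∧ ∀ i : Fin n, x ≠ t i) if and only if ((at least 1 element satisfies F) ∧ ∀ m, 1 ≤ m → m ≤ n → ((at least m+1 elements satisfy F) ∨ NDT(m))). -/
/-! The left side says that `{x | F x}` is not contained in the range of `t`. If a witness `x`
exists, adding it to any `m` distinct values `t i` satisfying `F` gives `m + 1` elements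
satisfying `F`. Conversely, if `{x | F x} ⊆ range t`, that set is a finite set of some size
`m` with `1 ≤ m ≤ n`: it consists of `m` distinct values `t i` satisfying `F`, refuting `NDT m`,
while no `m + 1` elements satisfy `F`. -/

section

variable {M : Type*} {F : M → Prop} {n : ℕ} {t : Fin n → M}

theorem atLeast_iff_exists_finset {k : ℕ} :
    AtLeast M k F ↔ ∃ s : Finset M, s.card = k ∧ ∀ x ∈ s, F x := by
  constructor
  · rintro ⟨f, hf, hF⟩
    exact ⟨Finset.univ.map ⟨f, hf⟩, by simp, by simpa using hF⟩
  · rintro ⟨s, rfl, hs⟩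
    exact ⟨fun i => s.equivFin.symm i, Subtype.val_injective.comp s.equivFin.symm.injective,
      fun i => hs _ (s.equivFin.symm i).2⟩

theorem not_NDT_iff_exists_finset {m : ℕ} :
    ¬ NDT F t m ↔ ∃ s : Finset M, s.card = m ∧ ∀ x ∈ s, F x ∧ x ∈ Set.range t := by
  classical
  constructor
  · intro h
    simp only [NDT, not_forall, not_or, not_exists, not_and, not_not] at h
    obtain ⟨S, hS, hF, hinj⟩ := h
    have hinjOn : Set.InjOn t S := fun i hi j hj hij =>
      by_contra fun hne => hinj i hi j hj hne hij
    refine ⟨S.image t, by rw [Finset.card_image_of_injOn hinjOn, hS], ?_⟩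
    simp only [Finset.mem_image]
    rintro _ ⟨i, hi, rfl⟩
    exact ⟨hF i hi, i, rfl⟩
  · rintro ⟨s, hs, hsF⟩ hndt
    have hsurj : Set.SurjOn t Set.univ s := fun x hx => by simpa using (hsF x hx).2
    obtain ⟨S, -, hinj, hSs⟩ := Finset.exists_subset_injOn_image_eq_of_surjOn _ s hsurj
    have hS : S.card = m := by rw [← hs, ← hSs, Finset.card_image_of_injOn hinj]
    have hmem : ∀ i ∈ S, t i ∈ s := fun i hi => hSs ▸ Finset.mem_image_of_mem t hi
    rcases hndt S hS with ⟨i, hi, hFi⟩ | ⟨i, hi, j, hj, hne, hij⟩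
    · exact hFi (hsF _ (hmem i hi)).1
    · exact hne (hinj hi hj hij)

theorem atLeast_succ_of_not_NDT {m : ℕ} {x : M} (hx : F x)
    (hxt : x ∉ Set.range t) (h : ¬ NDT F t m) :
    AtLeast M (m + 1) F := by
  obtain ⟨s, hs, hsF⟩ := not_NDT_iff_exists_finset.1 h
  have hxs : x ∉ s := fun hxs => hxt (hsF x hxs).2
  refine atLeast_iff_exists_finset.2 ⟨s.cons x hxs, by rw [Finset.card_cons, hs], ?_⟩
  simp only [Finset.mem_cons, forall_eq_or_imp]
  exact ⟨hx, fun y hy => (hsF y hy).1⟩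

theorem exists_not_atLeast_succ_not_NDT_of_subset_range (hF : {x | F x} ⊆ Set.range t)
    (h1 : AtLeast M 1 F) :
    ∃ m, 1 ≤ m ∧ m ≤ n ∧ ¬ AtLeast M (m + 1) F ∧ ¬ NDT F t m := by
  classical
  set V := (Finset.univ.image t).filter F
  have hV : ∀ x, x ∈ V ↔ F x := fun x => by
    simpa [V, and_comm, eq_comm] using fun hx : F x => hF hx
  have card_le : ∀ k, AtLeast M k F → k ≤ V.card := by
    intro k hk
    obtain ⟨s, rfl, hsF⟩ := atLeast_iff_exists_finset.1 hk
    exact Finset.card_le_card fun x hx => (hV x).2 (hsF x hx)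
  refine ⟨V.card, card_le 1 h1, ?_, fun h => by simpa using card_le _ h, ?_⟩
  · calc V.card ≤ (Finset.univ.image t).card := Finset.card_filter_le _ _
      _ ≤ n := Finset.card_image_le.trans_eq (Finset.card_fin n)
  · exact not_NDT_iff_exists_finset.2 ⟨V, rfl, fun x hx => ⟨(hV x).1 hx, hF ((hV x).1 hx)⟩⟩

end

theorem auxiliary_elimination_conjunctive (M : Type*) (F : M → Prop) (n : ℕ) (t : Fin n → M) :
    (∃ x : M, F x ∧ ∀ i : Fin n, x ≠ t i) ↔
      (AtLeast M 1 F ∧ ∀ m : ℕ, 1 ≤ m → m ≤ n → (AtLeast M (m + 1) F ∨ NDT F t m)) := by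
  have witness_iff : (∃ x, F x ∧ ∀ i, x ≠ t i) ↔ ¬ {x | F x} ⊆ Set.range t := by
    simp [Set.not_subset, eq_comm]
  rw [witness_iff]
  constructor
  · intro hF
    obtain ⟨x, hx, hxt⟩ := Set.not_subset.1 hF
    exact ⟨atLeast_iff_exists_finset.2 ⟨{x}, rfl, by simpa using hx⟩,
      fun m _ _ => or_iff_not_imp_right.2 (atLeast_succ_of_not_NDT hx hxt)⟩
  · rintro ⟨h1, hall⟩ hF
    obtain ⟨m, hm1, hmn, hnot, hndt⟩ := exists_not_atLeast_succ_not_NDT_of_subset_range hF h1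
    exact (hall m hm1 hmn).elim hnot hndt
end

section
/- Let M be a type; let a b c d : ℕ; and let A : Fin a → M → Prop, B : Fin b → M → Prop, C : Fin c → M → Prop, D : Fin d → M → Prop. Then (∃ p : M → Prop, (∀ i : Fin a, ∀ x, A i x ∨ p x) ∧ (∀ i : Fin b, ∀ x, B i x ∨ ¬ p x) ∧ (∀ i : Fin c, ∃ x, C i x ∧ p x) ∧ (∀ i : Fin d, ∃ x, D i x ∧ ¬ p x)) if and only if ((∀ x, (∀ i : Fin a, A i x) ∨ (∀ i : Fin b, B i x)) ∧ ∃ u : Fin c → M, ∃ v : Fin d → M, (∀ i j, u i ≠ v j) ∧ (∀ i : Fin c, C i (u i) ∧ ∀ j : Fin b, B j (u i)) ∧ (∀ i : Fin d, D i (v i) ∧ ∀ j : Fin a, A j (v i))). -/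
theorem elimination_on_hauptform (M : Type*) (a b c d : ℕ)
    (A : Fin a → M → Prop) (B : Fin b → M → Prop) (C : Fin c → M → Prop) (D : Fin d → M → Prop) :
    (∃ p : M → Prop,
        (∀ i : Fin a, ∀ x, A i x ∨ p x) ∧
        (∀ i : Fin b, ∀ x, B i x ∨ ¬ p x) ∧
        (∀ i : Fin c, ∃ x, C i x ∧ p x) ∧
        (∀ i : Fin d, ∃ x, D i x ∧ ¬ p x)) ↔
      ((∀ x, (∀ i : Fin a, A i x) ∨ (∀ i : Fin b, B i x)) ∧
        ∃ u : Fin c → M, ∃ v : Fin d → M,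
          (∀ i j, u i ≠ v j) ∧
          (∀ i : Fin c, C i (u i) ∧ ∀ j : Fin b, B j (u i)) ∧
          (∀ i : Fin d, D i (v i) ∧ ∀ j : Fin a, A j (v i))) := by
  constructor
  · rintro ⟨p, hA, hB, hC, hD⟩
    choose u hu hpu using hC
    choose v hv hpv using hD
    refine ⟨?_, u, v, ?_, ?_, ?_⟩
    · intro x
      by_cases hx : p x
      · exact Or.inr fun i => (hB i x).resolve_right (not_not_intro hx)
      · exact Or.inl fun i => (hA i x).resolve_right hx
    · intro i j h
      exact hpv j (h ▸ hpu i)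
    · intro i
      exact ⟨hu i, fun j => (hB j (u i)).resolve_right (not_not_intro (hpu i))⟩
    · intro i
      exact ⟨hv i, fun j => (hA j (v i)).resolve_right (hpv i)⟩
  · rintro ⟨h1, u, v, hne, hu, hv⟩
    refine ⟨fun x => (∃ i, x = u i) ∨ ¬(∀ j, A j x), ?_, ?_, ?_, ?_⟩
    · intro i x
      by_cases hx : ∀ j, A j x
      · exact Or.inl (hx i)
      · exact Or.inr (Or.inr hx)
    · rintro j x
      by_cases hx : (∃ i, x = u i) ∨ ¬(∀ j, A j x)
      · rcases hx with ⟨i, rfl⟩ | hx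
        · exact Or.inl ((hu i).2 j)
        · exact Or.inl (((h1 x).resolve_left hx) j)
      · exact Or.inr hx
    · intro i
      exact ⟨u i, (hu i).1, Or.inl ⟨i, rfl⟩⟩
    · intro i
      refine ⟨v i, (hv i).1, ?_⟩
      rintro (⟨j, hj⟩ | hx)
      · exact hne j i hj.symm
      · exact hx fun j => (hv i).2 j
end

section
/- Let M be a type, n : ℕ, and F : Finset (Fin n) → M → Prop. Then (∃ p : Fin n → M → Prop, ∀ S : Finset (Fin n), ∀ x : M, F S x ∨ (∃ i ∈ S, p i x) ∨ (∃ i, i ∉ S ∧ ¬ p i x)) if and only if (∀ x : M, ∃ S : Finset (Fin n), F S x). -/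
theorem simultaneous_elimination (M : Type*) (n : ℕ) (F : Finset (Fin n) → M → Prop) :
    (∃ p : Fin n → M → Prop, ∀ S : Finset (Fin n), ∀ x : M,
        F S x ∨ (∃ i ∈ S, p i x) ∨ (∃ i, i ∉ S ∧ ¬ p i x)) ↔
      ∀ x : M, ∃ S : Finset (Fin n), F S x := by
  classical
  constructor
  · rintro ⟨p, hp⟩ x
    refine ⟨Finset.univ.filter (fun i => ¬ p i x), ?_⟩
    rcases hp (Finset.univ.filter (fun i => ¬ p i x)) x with h | ⟨i, hi, hpi⟩ | ⟨i, hi, hpi⟩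
    · exact h
    · simp at hi; exact absurd hpi hi
    · simp at hi; exact absurd hi hpi
  · intro h
    choose T hT using h
    classical
    refine ⟨fun i x => i ∉ T x, fun S x => ?_⟩
    by_cases hS : S = T x
    · exact Or.inl (hS ▸ hT x)
    · have : ∃ i, (i ∈ S ∧ i ∉ T x) ∨ (i ∈ T x ∧ i ∉ S) := by
        by_contra hc
        push_neg at hc
        apply hS
        ext i
        have := hc i
        tauto
      rcases this with ⟨i, ⟨h1, h2⟩ | ⟨h1, h2⟩⟩
      · exact Or.inr (Or.inl ⟨i, h1, h2⟩)
      · exact Or.inr (Or.inr ⟨i, h2, by simpa using h1⟩)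
end

section
/- Let M be a type and A : M → M → Prop. Suppose there exists f : M → Prop such that for all x y : M, A x y ∨ ((f x ∨ f y) ∧ (¬ f x ∨ ¬ f y)). Then for every k : ℕ and every x : ℕ → M, either A (x 0) (x (2*k)) or there exists i < 2*k with A (x i) (x (i+1)). -/
theorem ackermann_example_consequences (M : Type*) (A : M → M → Prop)
    (h : ∃ f : M → Prop, ∀ x y : M, A x y ∨ ((f x ∨ f y) ∧ (¬ f x ∨ ¬ f y))) :
    ∀ (k : ℕ) (x : ℕ → M), A (x 0) (x (2 * k)) ∨ ∃ i < 2 * k, A (x i) (x (i + 1)) := by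
  obtain ⟨f, hf⟩ := h
  intro k x
  by_contra hc
  push_neg at hc
  obtain ⟨h1, h2⟩ := hc
  -- no A edge, so f alternates
  have hne : ∀ i < 2 * k, ¬ (f (x i) ↔ f (x (i+1))) := by
    intro i hi hiff
    rcases hf (x i) (x (i+1)) with hA | ⟨ho, hn⟩
    · exact h2 i hi hA
    · rcases ho with ho | ho <;> rcases hn with hn | hn <;> tauto
  have key : ∀ j ≤ 2 * k, (f (x j) ↔ f (x 0)) ↔ Even j := by
    intro j hj
    induction j with
    | zero => simp
    | succ n ih =>
      have hn : n < 2 * k := Nat.lt_of_succ_le hj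
      have ihn := ih (le_of_lt hn)
      have := hne n hn
      rw [Nat.even_add_one]
      tauto
  have h2k := (key (2 * k) le_rfl).2 (even_two_mul k)
  rcases hf (x 0) (x (2 * k)) with hA | ⟨ho, hn⟩
  · exact h1 hA
  · rcases ho with ho | ho <;> rcases hn with hn | hn <;> tauto
end
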